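/- Error bound for incremental Slepian-Wolf decoding after one source has been fully decoded (case with only one source still being transmitted): Let Y be a finite set, y₀ ∈ Y, and let ℓ_c : Y → ℕ be a lossless length function (|{y ∈ Y : ℓ_c(y) = l}| ≤ 2^l for every natural number l). Let k ≥ 1 and m ≥ 1 be integers, let r_y > 0 and ε > 0 be reals, and let L_y ≥ 0 be a real with m·r_y ≤ L_y. Set θ = (L_y − m·r_y)/k + ε. Let φ_y : Y → Fin 2^{⌊m·r_y⌋} be a uniformly random function. Then the probability that there exists ỹ ∈ Y with ỹ ≠ y₀, ℓ_c(ỹ) ≤ L_y − k·θ, and φ_y(ỹ) = φ_y(y₀) is at most 4·2^{−k·ε}. -/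

import Mathlib

/-!
Two distinct points land in the same bin of a uniformly random binning into `M` bins with
probability exactly `1 / M`, so by the union bound the error probability is at most
`#{ỹ | ℓ_c ỹ ≤ T} / M` with `T = L_y - kθ = m r_y - kε`. The lossless condition leaves fewer than
`2 ^ (⌊T⌋ + 1) ≤ 2 · 2 ^ T` such points, while `M = 2 ^ ⌊m r_y⌋ ≥ 2 ^ (m r_y - 1)`; the ratio is
therefore at most `4 · 2 ^ (-kε)`.
-/

open Finset

def IsLosslessLength {α : Type*} [Fintype α] (ℓ : α → ℕ) : Prop :=
  ∀ l : ℕ, #{a | ℓ a = l} ≤ 2 ^ l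

namespace IsLosslessLength

variable {α : Type*} [Fintype α] {ℓ : α → ℕ}

theorem card_filter_le_lt (hℓ : IsLosslessLength ℓ) (n : ℕ) : #{a | ℓ a ≤ n} < 2 ^ (n + 1) :=
  calc #{a | ℓ a ≤ n} = ∑ l ∈ range (n + 1), #{a ∈ {a | ℓ a ≤ n} | ℓ a = l} :=
        card_eq_sum_card_fiberwise fun a ha => by simpa [Nat.lt_succ_iff] using ha
    _ ≤ ∑ l ∈ range (n + 1), 2 ^ l :=
        sum_le_sum fun l _ =>
          (card_le_card (monotone_filter_left _ (filter_subset _ _))).trans (hℓ l)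
    _ < 2 ^ (n + 1) := Nat.geomSum_lt le_rfl fun _ => List.mem_range.mp

theorem card_filter_cast_le_le (hℓ : IsLosslessLength ℓ) (T : ℝ)
    [DecidablePred fun a => (ℓ a : ℝ) ≤ T] :
    (#{a | (ℓ a : ℝ) ≤ T} : ℝ) ≤ 2 * 2 ^ T := by
  rcases lt_or_ge T 0 with hT | hT
  · have : #{a | (ℓ a : ℝ) ≤ T} = 0 :=
      card_eq_zero.mpr <| filter_eq_empty_iff.mpr fun a _ => by
        have := (ℓ a).cast_nonneg (α := ℝ); linarith
    rw [this, Nat.cast_zero]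
    positivity
  have hfloor : #{a | (ℓ a : ℝ) ≤ T} = #{a | ℓ a ≤ ⌊T⌋₊} := by
    simp only [Nat.le_floor_iff hT]
  calc (#{a | (ℓ a : ℝ) ≤ T} : ℝ) ≤ 2 ^ (⌊T⌋₊ + 1) := by
        rw [hfloor]; exact_mod_cast (hℓ.card_filter_le_lt _).le
    _ = 2 * 2 ^ (⌊T⌋₊ : ℝ) := by rw [pow_succ', Real.rpow_natCast]
    _ ≤ 2 * 2 ^ T := by gcongr; exacts [one_le_two, Nat.floor_le hT]

end IsLosslessLength

theorem Real.rpow_sub_one_le_pow_floor {b : ℝ} (hb : 1 ≤ b) (x : ℝ) : b ^ (x - 1) ≤ b ^ ⌊x⌋₊ := by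
  rw [← Real.rpow_natCast]
  exact Real.rpow_le_rpow_of_exponent_le hb (Nat.sub_one_lt_floor x).le

section RandomBinning

variable {α β : Type*} [Fintype α] [DecidableEq α] [Fintype β] [DecidableEq β]

def collisionEquiv {a b : α} (hab : a ≠ b) : (α → β) ≃ {f : α → β // f a = f b} × β where
  toFun f := (⟨Function.update f a (f b), by simp [hab.symm]⟩, f a)
  invFun p := Function.update p.1.1 a p.2
  left_inv f := by simp
  right_inv := by
    rintro ⟨⟨g, hg⟩, c⟩
    simp [hab.symm, ← hg]

theorem card_filter_apply_eq_apply_mul_card {a b : α} (hab : a ≠ b) :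
    #{f : α → β | f a = f b} * Fintype.card β = Fintype.card β ^ Fintype.card α := by
  rw [← Fintype.card_subtype, ← Fintype.card_prod, ← Fintype.card_congr (collisionEquiv hab),
    Fintype.card_fun]

theorem card_filter_exists_apply_eq_div_card_le [Nonempty β] (b : α) (p : α → Prop)
    [DecidablePred p] :
    (#{f : α → β | ∃ a, a ≠ b ∧ p a ∧ f a = f b} : ℝ) / Fintype.card (α → β) ≤
      #{a | a ≠ b ∧ p a} / Fintype.card β := by
  have hunion : #{f : α → β | ∃ a, a ≠ b ∧ p a ∧ f a = f b} ≤
      ∑ a ∈ {a | a ≠ b ∧ p a}, #{f : α → β | f a = f b} :=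
    (card_le_card fun f hf => by simpa [and_assoc] using hf).trans card_biUnion_le
  have hpair : ∀ a ∈ ({a | a ≠ b ∧ p a} : Finset α),
      (#{f : α → β | f a = f b} : ℝ) = Fintype.card (α → β) / Fintype.card β := fun a ha => by
    rw [eq_div_iff (by positivity), Fintype.card_fun]
    exact_mod_cast card_filter_apply_eq_apply_mul_card (mem_filter.mp ha).2.1
  rw [div_le_div_iff₀ (by positivity) (by positivity)]
  calc (#{f : α → β | ∃ a, a ≠ b ∧ p a ∧ f a = f b} : ℝ) * Fintype.card β
      ≤ (∑ a ∈ {a | a ≠ b ∧ p a}, #{f : α → β | f a = f b} : ℕ) * Fintype.card β := by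
        gcongr
    _ = #{a | a ≠ b ∧ p a} * Fintype.card (α → β) := by
        rw [Nat.cast_sum, sum_congr rfl hpair, sum_const, nsmul_eq_mul]
        field_simp

end RandomBinning

open scoped Classical in
theorem incremental_sw_error_single_general (Y : Type*) [Fintype Y] (y₀ : Y)
    (ℓc : Y → ℕ)
    (hℓc : ∀ l : ℕ, (Finset.univ.filter fun y => ℓc y = l).card ≤ 2 ^ l)
    (k m : ℕ) (hk : 1 ≤ k) (ry ε Ly : ℝ)
    (θ : ℝ) (hθ : θ = (Ly - m * ry) / k + ε) :
    ((Finset.univ.filter fun φ : Y → Fin (2 ^ ⌊(m : ℝ) * ry⌋₊) =>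
        ∃ y : Y, y ≠ y₀ ∧ (ℓc y : ℝ) ≤ Ly - k * θ ∧ φ y = φ y₀).card : ℝ) /
      (Fintype.card (Y → Fin (2 ^ ⌊(m : ℝ) * ry⌋₊))) ≤
      4 * (2 : ℝ) ^ (-(k : ℝ) * ε) := by
  have hk0 : (k : ℝ) ≠ 0 := Nat.cast_ne_zero.mpr (by omega)
  have hT : Ly - k * θ = m * ry - k * ε := by
    rw [hθ]; field_simp; ring
  calc _ ≤ (#{y | y ≠ y₀ ∧ (ℓc y : ℝ) ≤ Ly - k * θ} : ℝ) /
          Fintype.card (Fin (2 ^ ⌊(m : ℝ) * ry⌋₊)) :=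
        card_filter_exists_apply_eq_div_card_le _ _
    _ ≤ 2 * 2 ^ (Ly - k * θ) / 2 ^ ((m : ℝ) * ry - 1) := by
        rw [Fintype.card_fin, Nat.cast_pow, Nat.cast_ofNat]
        gcongr
        · have hsub : #{y | y ≠ y₀ ∧ (ℓc y : ℝ) ≤ Ly - k * θ} ≤ #{y | (ℓc y : ℝ) ≤ Ly - k * θ} :=
            card_le_card <| monotone_filter_right _ fun _ _ => And.right
          exact (Nat.cast_le.mpr hsub).trans
            (IsLosslessLength.card_filter_cast_le_le hℓc _)
        · exact Real.rpow_sub_one_le_pow_floor one_le_two _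
    _ = 4 * (2 : ℝ) ^ (-(k : ℝ) * ε) := by
        rw [hT, mul_div_assoc, ← Real.rpow_sub two_pos,
          show (m : ℝ) * ry - k * ε - (m * ry - 1) = -(k : ℝ) * ε + 1 by ring,
          Real.rpow_add two_pos, Real.rpow_one]
        ring

open scoped Classical in
/-- Error bound for incremental Slepian-Wolf decoding after one source has been
fully decoded: with `θ = (L_y − m·r_y)/k + ε` and a uniformly random binning
`φ_y : Y → Fin 2^⌊m·r_y⌋`, the probability that some `ỹ ≠ y₀` with
`ℓ_c ỹ ≤ L_y − k·θ` falls in the bin of `y₀` is at most `4 · 2^{−k·ε}`. -/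
theorem incremental_sw_error_single (Y : Type*) [Fintype Y] (y₀ : Y)
    (ℓc : Y → ℕ)
    (hℓc : ∀ l : ℕ, (Finset.univ.filter fun y => ℓc y = l).card ≤ 2 ^ l)
    (k m : ℕ) (hk : 1 ≤ k) (hm : 1 ≤ m) (ry ε Ly : ℝ)
    (hry : 0 < ry) (hε : 0 < ε) (hLy : 0 ≤ Ly) (hmy : (m : ℝ) * ry ≤ Ly)
    (θ : ℝ) (hθ : θ = (Ly - m * ry) / k + ε) :
    ((Finset.univ.filter fun φ : Y → Fin (2 ^ ⌊(m : ℝ) * ry⌋₊) =>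
        ∃ y : Y, y ≠ y₀ ∧ (ℓc y : ℝ) ≤ Ly - k * θ ∧ φ y = φ y₀).card : ℝ) /
      (Fintype.card (Y → Fin (2 ^ ⌊(m : ℝ) * ry⌋₊))) ≤
      4 * (2 : ℝ) ^ (-(k : ℝ) * ε) :=
  incremental_sw_error_single_general Y y₀ ℓc hℓc k m hk ry ε Ly θ hθ
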